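/- arXiv:1704.08664 — 3 statements merged into one kernel-verified Lean document; each statement's English description precedes it below -/
import Mathlib

section
/- Let φ : M → N be an A-module homomorphism with double φ_D : M_D → N_D. Then φ is surjective if and only if φ_D is surjective. -/
/-!
Restricting the first component of a double to the diagonal `{(t, t)}` undoes doubling:
`diagRes h_D = h`. This restriction is semilinear along `b ↦ (t ↦ b (t, t)) : B → A`,
maps `M_D` onto `M`, and intertwines `φ_D` with `φ`, so surjectivity of `φ_D` descends to `φ`.
Conversely, the range of `φ_D` contains every generator `n_D = φ_D m_D` of `N_D` once `φ`
is onto.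
-/

/-- The double of a tuple of functions: `h_D := (h ∘ π₁, h ∘ π₂)`. -/
def double {k X ι : Type} (h : ι → X → k) :
    (ι → X × X → k) × (ι → X × X → k) :=
  (fun i => h i ∘ Prod.fst, fun i => h i ∘ Prod.snd)

/-- The double of a submodule `M ⊆ A^ι`: the `B`-submodule of `B^{2ι}`
generated by the doubles of elements of `M`, where `A = X → k`, `B = X × X → k`. -/
def doubleSub {k X ι : Type} [CommRing k] (M : Submodule (X → k) (ι → X → k)) :
    Submodule (X × X → k) ((ι → X × X → k) × (ι → X × X → k)) :=
  Submodule.span (X × X → k) (double '' (M : Set (ι → X → k)))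

lemma mem_doubleSub {k X ι : Type} [CommRing k] {M : Submodule (X → k) (ι → X → k)}
    {h : ι → X → k} (hm : h ∈ M) : double h ∈ doubleSub M :=
  Submodule.subset_span ⟨h, hm, rfl⟩

namespace Submodule

variable {R M P : Type*} [Semiring R] [AddCommMonoid M] [Module R M] [AddCommMonoid P]
  [Module R P]

theorem surjective_of_generators_mem_range {s : Set M} (f : P →ₗ[R] span R s)
    (hf : ∀ x (hx : x ∈ s), ∃ y, f y = ⟨x, subset_span hx⟩) :
    Function.Surjective f := by
  rw [← LinearMap.range_eq_top, eq_top_iff, ← span_span_coe_preimage, span_le]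
  rintro ⟨x, _⟩ hx
  exact hf x hx

end Submodule

def diagRingHom (k X : Type) [CommRing k] : (X × X → k) →+* (X → k) :=
  RingHom.pi fun t => Pi.evalRingHom _ (t, t)

section Diagonal

variable {k X : Type} [CommRing k]

def diagRes (ι : Type) :
    ((ι → X × X → k) × (ι → X × X → k)) →ₛₗ[diagRingHom k X] (ι → X → k) where
  toFun z i t := z.1 i (t, t)
  map_add' _ _ := rfl
  map_smul' _ _ := rfl

variable {ι κ : Type}

theorem doubleSub_le_comap_diagRes (M : Submodule (X → k) (ι → X → k)) :
    doubleSub M ≤ M.comap (diagRes ι) :=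
  Submodule.span_le.2 fun _ ⟨_, hh, hD⟩ => hD ▸ hh

def diagResSub (M : Submodule (X → k) (ι → X → k)) :
    doubleSub M →ₛₗ[diagRingHom k X] M :=
  (diagRes ι).restrict fun _ hz => doubleSub_le_comap_diagRes M hz

theorem diagResSub_surjective (M : Submodule (X → k) (ι → X → k)) :
    Function.Surjective (diagResSub M) :=
  fun h => ⟨⟨double h.1, mem_doubleSub h.2⟩, rfl⟩

theorem comp_diagResSub_eq_diagResSub_comp {M : Submodule (X → k) (ι → X → k)}
    {N : Submodule (X → k) (κ → X → k)} (φ : M →ₗ[X → k] N)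
    (φD : doubleSub M →ₗ[X × X → k] doubleSub N)
    (hφD : ∀ (h : ι → X → k) (hm : h ∈ M),
      φD ⟨double h, mem_doubleSub hm⟩
        = ⟨double (φ ⟨h, hm⟩ : κ → X → k), mem_doubleSub (φ ⟨h, hm⟩).2⟩) :
    φ ∘ₛₗ diagResSub M = diagResSub N ∘ₛₗ φD := by
  refine LinearMap.ext_on Submodule.span_span_coe_preimage ?_
  rintro ⟨_, hD⟩ ⟨h, hh, rfl⟩
  simp only [LinearMap.coe_comp, Function.comp_apply, hφD h hh]
  rfl

end Diagonal

theorem surjective_iff_double_surjective {k X : Type} [CommRing k] {p q : ℕ}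
    (M : Submodule (X → k) (Fin p → X → k)) (N : Submodule (X → k) (Fin q → X → k))
    (φ : M →ₗ[X → k] N)
    (φD : doubleSub M →ₗ[X × X → k] doubleSub N)
    (hφD : ∀ (h : Fin p → X → k) (hm : h ∈ M),
      φD ⟨double h, mem_doubleSub hm⟩
        = ⟨double (φ ⟨h, hm⟩ : Fin q → X → k), mem_doubleSub (φ ⟨h, hm⟩).2⟩) :
    Function.Surjective φ ↔ Function.Surjective φD := by
  refine ⟨fun hφ => ?_, fun hφD_surj => ?_⟩
  · refine Submodule.surjective_of_generators_mem_range φD ?_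
    rintro _ ⟨n, hn, rfl⟩
    obtain ⟨m, hm⟩ := hφ ⟨n, hn⟩
    exact ⟨⟨double m.1, mem_doubleSub m.2⟩, (hφD m.1 m.2).trans (by rw [hm]; rfl)⟩
  · have hcomp : Function.Surjective (φ ∘ₛₗ diagResSub M) := by
      rw [comp_diagResSub_eq_diagResSub_comp φ φD hφD]
      exact (diagResSub_surjective N).comp hφD_surj
    exact Function.Surjective.of_comp hcomp
end

section
/- Let φ : M → N be an A-module homomorphism with double φ_D : M_D → N_D. Then φ is bijective (an A-module isomorphism) if and only if φ_D is bijective (a B-module isomorphism). -/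
/-!
Restricting a function on `X × X` along a section `e` of a coordinate projection (`x ↦ (x, y)`,
`x ↦ (y, x)` or the diagonal) is semilinear over the ring map `b ↦ b ∘ e` from `B` to `A` and sends
`h_D` back to `h`. Hence it maps `M_D` into `M` and intertwines `φ_D` with `φ`, as both composites
agree on the generators `h_D`. Injectivity of `φ` passes to `φ_D` because an element of `M_D` is
determined by its slices, and surjectivity of `φ_D` passes to `φ` through the diagonal slice; the
other two implications already hold on generators.
-/

variable {k X : Type} [CommRing k]

def precompRingHom {Y : Type} (e : X → Y) : (Y → k) →+* (X → k) :=
  RingHom.pi fun x => Pi.evalRingHom (fun _ => k) (e x)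

section Slices

variable (k) (ι : Type)

def fstSlice (e : X → X × X) :
    ((ι → X × X → k) × (ι → X × X → k)) →ₛₗ[precompRingHom (k := k) e] (ι → X → k) where
  toFun v i := v.1 i ∘ e
  map_add' _ _ := rfl
  map_smul' _ _ := rfl

def sndSlice (e : X → X × X) :
    ((ι → X × X → k) × (ι → X × X → k)) →ₛₗ[precompRingHom (k := k) e] (ι → X → k) where
  toFun v i := v.2 i ∘ e
  map_add' _ _ := rfl
  map_smul' _ _ := rfl

variable {k ι}

@[simp]
lemma fstSlice_apply (e : X → X × X) (v : (ι → X × X → k) × (ι → X × X → k)) (i : ι) (x : X) :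
    fstSlice k ι e v i x = v.1 i (e x) :=
  rfl

@[simp]
lemma sndSlice_apply (e : X → X × X) (v : (ι → X × X → k) × (ι → X × X → k)) (i : ι) (x : X) :
    sndSlice k ι e v i x = v.2 i (e x) :=
  rfl

lemma fstSlice_double {e : X → X × X} (he : ∀ x, (e x).1 = x) (h : ι → X → k) :
    fstSlice k ι e (double h) = h := by
  ext i x
  simp [double, he]

lemma sndSlice_double {e : X → X × X} (he : ∀ x, (e x).2 = x) (h : ι → X → k) :
    sndSlice k ι e (double h) = h := by
  ext i x
  simp [double, he]

lemma double_injective : Function.Injective (double : (ι → X → k) → _) := by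
  intro h h' hh
  simpa only [fstSlice_double (e := fun x => (x, x)) fun _ => rfl] using
    congrArg (fstSlice k ι fun x => (x, x)) hh

end Slices

section Double

variable {ι κ : Type} {M : Submodule (X → k) (ι → X → k)} {N : Submodule (X → k) (κ → X → k)}
  {σ : (X × X → k) →+* (X → k)}

lemma doubleSub_le_comap (S : ((ι → X × X → k) × (ι → X × X → k)) →ₛₗ[σ] (ι → X → k))
    (hS : ∀ h, S (double h) = h) : doubleSub M ≤ M.comap S :=
  Submodule.span_le.2 <| by
    rintro _ ⟨h, hm, rfl⟩
    simpa [hS] using hm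

def IsDoubleOf (φ : M →ₗ[X → k] N) (φD : doubleSub M →ₗ[X × X → k] doubleSub N) : Prop :=
  ∀ (h : ι → X → k) (hm : h ∈ M), φD ⟨double h, mem_doubleSub hm⟩
    = ⟨double (φ ⟨h, hm⟩ : κ → X → k), mem_doubleSub (φ ⟨h, hm⟩).2⟩

variable {φ : M →ₗ[X → k] N} {φD : doubleSub M →ₗ[X × X → k] doubleSub N}

theorem IsDoubleOf.map_slice (hφD : IsDoubleOf φ φD)
    (S : ((ι → X × X → k) × (ι → X × X → k)) →ₛₗ[σ] (ι → X → k))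
    (T : ((κ → X × X → k) × (κ → X × X → k)) →ₛₗ[σ] (κ → X → k))
    (hS : ∀ h, S (double h) = h) (hT : ∀ h, T (double h) = h) (v : doubleSub M) :
    (φ ⟨S v, doubleSub_le_comap S hS v.2⟩ : κ → X → k) = T (φD v) := by
  have key : N.subtype.comp (φ.comp ((S.comp (doubleSub M).subtype).codRestrict M
      fun v => doubleSub_le_comap S hS v.2)) = T.comp ((doubleSub N).subtype.comp φD) := by
    refine LinearMap.ext_on Submodule.span_span_coe_preimage ?_
    rintro ⟨_, _⟩ ⟨h, hm, rfl⟩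
    show (φ ⟨S (double h), _⟩ : κ → X → k) = T (φD ⟨double h, _⟩)
    rw [hφD h hm, hT]
    exact congrArg (fun m => (φ m : κ → X → k)) (Subtype.ext (hS h))
  exact LinearMap.congr_fun key v

theorem IsDoubleOf.slice_eq_zero (hφD : IsDoubleOf φ φD) (hφ : Function.Injective φ)
    (S : ((ι → X × X → k) × (ι → X × X → k)) →ₛₗ[σ] (ι → X → k))
    (T : ((κ → X × X → k) × (κ → X × X → k)) →ₛₗ[σ] (κ → X → k))
    (hS : ∀ h, S (double h) = h) (hT : ∀ h, T (double h) = h) {z : doubleSub M}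
    (hz : φD z = 0) : S z = 0 := by
  have : φ ⟨S z, doubleSub_le_comap S hS z.2⟩ = φ 0 := by
    ext1
    rw [hφD.map_slice S T hS hT z, hz]
    simp
  exact congrArg Subtype.val (hφ this)

theorem IsDoubleOf.injective_iff (hφD : IsDoubleOf φ φD) :
    Function.Injective φ ↔ Function.Injective φD := by
  constructor
  · intro hφ
    rw [injective_iff_map_eq_zero]
    intro z hz
    ext i ⟨x, y⟩
    · exact congrFun (congrFun (hφD.slice_eq_zero hφ (fstSlice k ι (·, y)) (fstSlice k κ (·, y))
        (fstSlice_double fun _ => rfl) (fstSlice_double fun _ => rfl) hz) i) x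
    · exact congrFun (congrFun (hφD.slice_eq_zero hφ (sndSlice k ι (x, ·)) (sndSlice k κ (x, ·))
        (sndSlice_double fun _ => rfl) (sndSlice_double fun _ => rfl) hz) i) y
  · intro hφD_inj m m' hm
    have hD : φD ⟨double m, mem_doubleSub m.2⟩ = φD ⟨double m', mem_doubleSub m'.2⟩ := by
      rw [hφD m m.2, hφD m' m'.2]
      simp [hm]
    exact Subtype.ext (double_injective (congrArg Subtype.val (hφD_inj hD)))

theorem IsDoubleOf.surjective_iff (hφD : IsDoubleOf φ φD) :
    Function.Surjective φ ↔ Function.Surjective φD := by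
  constructor
  · intro hφ
    rw [← LinearMap.range_eq_top, eq_top_iff]
    refine Submodule.span_span_coe_preimage.symm.le.trans (Submodule.span_le.2 ?_)
    rintro ⟨_, hw⟩ ⟨g, hg, rfl⟩
    obtain ⟨m, hm⟩ := hφ ⟨g, hg⟩
    refine ⟨⟨double m, mem_doubleSub m.2⟩, Subtype.ext ?_⟩
    rw [hφD m m.2]
    simp [hm]
  · intro hφD_surj g
    obtain ⟨z, hz⟩ := hφD_surj ⟨double g, mem_doubleSub g.2⟩
    have hΔ : ∀ {ι : Type} (h : ι → X → k), fstSlice k ι (fun x => (x, x)) (double h) = h :=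
      fstSlice_double fun _ => rfl
    refine ⟨⟨_, doubleSub_le_comap _ hΔ z.2⟩, Subtype.ext ?_⟩
    rw [hφD.map_slice _ _ hΔ hΔ z, hz, hΔ]

end Double

theorem bijective_iff_double_bijective {k X : Type} [CommRing k] {p q : ℕ}
    (M : Submodule (X → k) (Fin p → X → k)) (N : Submodule (X → k) (Fin q → X → k))
    (φ : M →ₗ[X → k] N)
    (φD : doubleSub M →ₗ[X × X → k] doubleSub N)
    (hφD : ∀ (h : Fin p → X → k) (hm : h ∈ M),
      φD ⟨double h, mem_doubleSub hm⟩
        = ⟨double (φ ⟨h, hm⟩ : Fin q → X → k), mem_doubleSub (φ ⟨h, hm⟩).2⟩) :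
    Function.Bijective φ ↔ Function.Bijective φD :=
  have hφD : IsDoubleOf φ φD := hφD
  and_congr hφD.injective_iff hφD.surjective_iff
end

section
/- Let M ⊆ N ⊆ A^p be A-submodules. If M_D has finite colength in N_D (i.e. the B-module N_D/M_D has finite length), then M has finite colength in N, i.e. N/M has finite length as an A-module. -/
/-- Module length as the supremum of lengths of strictly ascending chains of submodules. -/
noncomputable def moduleLength (R M : Type) [CommRing R] [AddCommGroup M] [Module R M] :
    WithBot ℕ∞ :=
  Order.krullDim (Submodule R M)

def restrictDiagonal (k X : Type) [CommRing k] : (X × X → k) →+* (X → k) where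
  toFun g x := g (x, x)
  map_one' := rfl
  map_mul' _ _ := rfl
  map_zero' := rfl
  map_add' _ _ := rfl

/-- A left inverse of `double`. -/
def fstRestrictDiagonal (k X ι : Type) [CommRing k] :
    ((ι → X × X → k) × (ι → X × X → k)) →ₛₗ[restrictDiagonal k X] (ι → X → k) where
  toFun v i x := v.1 i (x, x)
  map_add' _ _ := rfl
  map_smul' _ _ := rfl

section doubleSub

variable {k X ι : Type} [CommRing k]

theorem doubleSub_le_comap_fstRestrictDiagonal (M : Submodule (X → k) (ι → X → k)) :
    doubleSub M ≤ M.comap (fstRestrictDiagonal k X ι) := by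
  rw [doubleSub, Submodule.span_le]
  rintro _ ⟨h, hh, rfl⟩
  exact hh

theorem double_mem_doubleSub_iff {M : Submodule (X → k) (ι → X → k)} {h : ι → X → k} :
    double h ∈ doubleSub M ↔ h ∈ M :=
  ⟨fun hd => doubleSub_le_comap_fstRestrictDiagonal M hd, mem_doubleSub⟩

theorem doubleSub_mono : Monotone (doubleSub : Submodule (X → k) (ι → X → k) → _) :=
  fun _ _ h => Submodule.span_mono (Set.image_mono h)

theorem doubleSub_strictMono :
    StrictMono (doubleSub : Submodule (X → k) (ι → X → k) → _) := by
  refine doubleSub_mono.strictMono_of_injective fun P Q hPQ => ?_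
  ext h
  rw [← double_mem_doubleSub_iff, hPQ, double_mem_doubleSub_iff]

end doubleSub

namespace Submodule

variable {R V : Type*} [Ring R] [AddCommGroup V] [Module R V] {M N : Submodule R V}

def iciComapSubtypeOrderIso (hMN : M ≤ N) : Set.Ici (M.comap N.subtype) ≃o Set.Icc M N where
  toFun S := ⟨S.1.map N.subtype, by
    simpa [map_comap_subtype, inf_of_le_right hMN] using map_mono (f := N.subtype) S.2,
    map_subtype_le _ _⟩
  invFun T := ⟨T.1.comap N.subtype, comap_mono T.2.1⟩
  left_inv S := Subtype.ext (comap_map_eq_of_injective N.injective_subtype _)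
  right_inv T := Subtype.ext (by simp [map_comap_subtype, inf_of_le_right T.2.2])
  map_rel_iff' := map_le_map_iff_of_injective N.injective_subtype _ _

theorem krullDim_quotient_comap_subtype (hMN : M ≤ N) :
    Order.krullDim (Submodule R (N ⧸ M.comap N.subtype)) = Order.krullDim (Set.Icc M N) :=
  Order.krullDim_eq_of_orderIso ((comapMkQRelIso _).trans (iciComapSubtypeOrderIso hMN))

end Submodule

theorem finite_colength_of_double_finite_colength {k X : Type} [CommRing k] {p : ℕ}
    (M N : Submodule (X → k) (Fin p → X → k)) (hMN : M ≤ N)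
    (hfin : moduleLength (X × X → k)
        (↥(doubleSub N) ⧸ Submodule.comap (doubleSub N).subtype (doubleSub M)) ≠ ⊤) :
    moduleLength (X → k) (↥N ⧸ Submodule.comap N.subtype M) ≠ ⊤ := by
  let doubleIcc : Set.Icc M N → Set.Icc (doubleSub M) (doubleSub N) :=
    fun T => ⟨doubleSub T, doubleSub_mono T.2.1, doubleSub_mono T.2.2⟩
  have hdouble : StrictMono doubleIcc := fun _ _ hST => doubleSub_strictMono hST
  rw [moduleLength, Submodule.krullDim_quotient_comap_subtype hMN]
  rw [moduleLength, Submodule.krullDim_quotient_comap_subtype (doubleSub_mono hMN)] at hfin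
  exact ne_top_of_le_ne_top hfin (Order.krullDim_le_of_strictMono _ hdouble)
end
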